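/- arXiv:1811.05379 — 3 statements merged into one kernel-verified Lean document; each statement's English description precedes it below -/
import Mathlib

section
/- Let X₁, X₂, … be i.i.d. with distribution function F and let X_(n) = max_{1≤i≤n} X_i. For a constant τ ≥ 0 and a real sequence (u_n), one has n(1 − F(u_n)) → τ if and only if P(X_(n) ≤ u_n) → e^{−τ}. -/
/-!
By independence and identical distribution, `P(X_(n) ≤ u n) = F (u n) ^ n`, so the claim is
that `n (1 - a n) → τ` iff `a n ^ n → exp (-τ)` for `a n = F (u n) ≥ 0`. The forward
direction is `(1 + g n) ^ n → exp t` whenever `n g n → t`. The converse follows from it by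
comparison: for `σ ≠ τ` the sequence `(1 - σ / n) ^ n` tends to `exp (-σ) ≠ exp (-τ)`, which
by monotonicity of `x ↦ x ^ n` on `[0, ∞)` eventually puts `a n` on the correct side of
`1 - σ / n`.
-/

open MeasureTheory Filter ProbabilityTheory Topology

namespace ProbabilityTheory

variable {Ω ι β : Type*} [MeasurableSpace Ω] [MeasurableSpace β] {μ : Measure Ω}

lemma iIndepFun.measure_forall_mem_eq_pow {X : ι → Ω → β} (hindep : iIndepFun X μ) {i₀ : ι}
    (hident : ∀ i, IdentDistrib (X i) (X i₀) μ μ) {s : Set β} (hs : MeasurableSet s)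
    (S : Finset ι) :
    μ {ω | ∀ i ∈ S, X i ω ∈ s} = μ (X i₀ ⁻¹' s) ^ S.card := by
  have hinter : {ω | ∀ i ∈ S, X i ω ∈ s} = ⋂ i ∈ S, X i ⁻¹' s := by
    ext ω
    simp
  rw [hinter, hindep.meas_biInter fun i _ => ⟨s, hs, rfl⟩,
    Finset.prod_congr rfl fun i _ => (hident i).measure_mem_eq hs, Finset.prod_const]

end ProbabilityTheory

namespace Real

lemma tendsto_pow_of_tendsto_nat_mul_one_sub {a : ℕ → ℝ} {τ : ℝ}
    (h : Tendsto (fun n : ℕ => (n : ℝ) * (1 - a n)) atTop (𝓝 τ)) :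
    Tendsto (fun n => a n ^ n) atTop (𝓝 (exp (-τ))) := by
  have hneg : Tendsto (fun n : ℕ => (n : ℝ) * (a n - 1)) atTop (𝓝 (-τ)) := by
    simpa only [← mul_neg, neg_sub] using h.neg
  simpa only [add_sub_cancel] using tendsto_one_add_pow_exp_of_tendsto hneg

lemma tendsto_nat_mul_one_sub_of_tendsto_pow {a : ℕ → ℝ} (ha : ∀ᶠ n in atTop, 0 ≤ a n)
    {τ : ℝ} (h : Tendsto (fun n => a n ^ n) atTop (𝓝 (exp (-τ)))) :
    Tendsto (fun n : ℕ => (n : ℝ) * (1 - a n)) atTop (𝓝 τ) := by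
  have hcompare (σ : ℝ) : Tendsto (fun n : ℕ => (1 - σ / n) ^ n) atTop (𝓝 (exp (-σ))) := by
    simpa only [sub_eq_add_neg, neg_div] using tendsto_one_add_div_pow_exp (-σ)
  refine tendsto_order.2 ⟨fun σ hσ => ?_, fun σ hσ => ?_⟩
  · have hlt : ∀ᶠ n : ℕ in atTop, a n ^ n < (1 - σ / n) ^ n :=
      h.eventually_lt (hcompare σ) (exp_lt_exp.2 (neg_lt_neg hσ))
    have hsmall : ∀ᶠ n : ℕ in atTop, σ / n ≤ 1 :=
      (tendsto_const_div_atTop_nhds_zero_nat σ).eventually (eventually_le_nhds one_pos)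
    filter_upwards [hlt, hsmall, eventually_gt_atTop 0] with n hn hsmall hpos
    have hn' : a n < 1 - σ / n := lt_of_pow_lt_pow_left₀ n (sub_nonneg.2 hsmall) hn
    have hpos' : (0 : ℝ) < n := Nat.cast_pos.2 hpos
    rw [lt_sub_iff_add_lt, ← lt_sub_iff_add_lt', div_lt_iff₀ hpos'] at hn'
    linarith
  · have hlt : ∀ᶠ n : ℕ in atTop, (1 - σ / n) ^ n < a n ^ n :=
      (hcompare σ).eventually_lt h (exp_lt_exp.2 (neg_lt_neg hσ))
    filter_upwards [hlt, ha, eventually_gt_atTop 0] with n hn ha hpos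
    have hn' : 1 - σ / n < a n := lt_of_pow_lt_pow_left₀ n ha hn
    have hpos' : (0 : ℝ) < n := Nat.cast_pos.2 hpos
    rw [sub_lt_comm, lt_div_iff₀ hpos'] at hn'
    linarith

end Real

theorem max_iid_tendsto_exp_iff_general
    {Ω : Type*} [MeasurableSpace Ω] (μ : Measure Ω)
    (X : ℕ → Ω → ℝ)
    (hindep : iIndepFun X μ)
    (hident : ∀ i, IdentDistrib (X i) (X 0) μ μ)
    (F : ℝ → ℝ) (hF : ∀ x, F x = (μ {ω | X 0 ω ≤ x}).toReal)
    (τ : ℝ) (u : ℕ → ℝ) :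
    Tendsto (fun n : ℕ => (n : ℝ) * (1 - F (u n))) atTop (nhds τ)
    ↔ Tendsto (fun n : ℕ => (μ {ω | ∀ i ∈ Finset.range n, X i ω ≤ u n}).toReal)
        atTop (nhds (Real.exp (-τ))) := by
  have hmax (n : ℕ) : (μ {ω | ∀ i ∈ Finset.range n, X i ω ≤ u n}).toReal = F (u n) ^ n := by
    have := hindep.measure_forall_mem_eq_pow hident (measurableSet_Iic (a := u n)) (.range n)
    rw [Finset.card_range] at this
    rw [hF, ← ENNReal.toReal_pow]
    exact congrArg ENNReal.toReal this
  simp only [hmax]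
  exact ⟨Real.tendsto_pow_of_tendsto_nat_mul_one_sub,
    Real.tendsto_nat_mul_one_sub_of_tendsto_pow
      (Eventually.of_forall fun n => hF (u n) ▸ ENNReal.toReal_nonneg)⟩

/-- For i.i.d. random variables `X i` with distribution function `F` and
`X_(n) = max_{i < n} X i`, for `τ ≥ 0` and a real sequence `u`, one has
`n (1 − F (u n)) → τ` iff `P(X_(n) ≤ u n) → exp (−τ)`. -/
theorem max_iid_tendsto_exp_iff
    {Ω : Type*} [MeasurableSpace Ω] (μ : Measure Ω) [IsProbabilityMeasure μ]
    (X : ℕ → Ω → ℝ) (hmeas : ∀ i, Measurable (X i))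
    (hindep : iIndepFun X μ)
    (hident : ∀ i, IdentDistrib (X i) (X 0) μ μ)
    (F : ℝ → ℝ) (hF : ∀ x, F x = (μ {ω | X 0 ω ≤ x}).toReal)
    (τ : ℝ) (hτ : 0 ≤ τ) (u : ℕ → ℝ) :
    Tendsto (fun n : ℕ => (n : ℝ) * (1 - F (u n))) atTop (nhds τ)
    ↔ Tendsto (fun n : ℕ => (μ {ω | ∀ i ∈ Finset.range n, X i ω ≤ u n}).toReal)
        atTop (nhds (Real.exp (-τ))) :=
  max_iid_tendsto_exp_iff_general μ X hindep hident F hF τ u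
end

section
/- Let X = (1, X₂)^T with X₂ ∈ (0,1) and Y = U³/3 − X₂(U−1)² for U ~ Uniform(0,1) independent of X₂. Then the conditional quantile function is Q_x(τ) = τ³/3 − (τ−1)² x₂, which is linear in x = (1, x₂), the minimizer of τ ↦ Q_x'(τ) over (0,1) is τ_x = x₂, and the conditional mode is m(x) = −2x₂³/3 + 2x₂² − x₂, which is a nonlinear function of x₂. -/
/-!
For fixed `x₂ ∈ (0,1)` the map `Q τ = τ³/3 − (τ−1)² x₂` has derivative `τ² + 2(1−τ) x₂ > 0` on
`(0,1)`, so `Q(U) ≤ Q(τ)` iff `U ≤ τ` and `Q` is the quantile function of `Q(U)`. The sparsity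
`Q'` satisfies `Q'(τ) = Q'(x₂) + (τ − x₂)²`, whence its minimizer is `x₂` and the mode is
`Q(x₂)`, a cubic in `x₂` that fails the midpoint test for affine maps at `1/4, 1/2, 3/4`.
-/

open MeasureTheory Set

theorem restrict_Ioo_setOf_le_eq_ofReal {g : ℝ → ℝ} {a b τ : ℝ} (hg : StrictMonoOn g (Ioo a b))
    (hτ : τ ∈ Ioo a b) :
    volume.restrict (Ioo a b) {u | g u ≤ g τ} = ENNReal.ofReal (τ - a) := by
  have hset : {u | g u ≤ g τ} ∩ Ioo a b = Ioc a τ := by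
    ext u
    constructor
    · rintro ⟨hle, hu⟩
      exact ⟨hu.1, (hg.le_iff_le hu hτ).1 hle⟩
    · rintro ⟨hau, huτ⟩
      have hu : u ∈ Ioo a b := ⟨hau, huτ.trans_lt hτ.2⟩
      exact ⟨(hg.le_iff_le hu hτ).2 huτ, hu⟩
  rw [Measure.restrict_apply' measurableSet_Ioo, hset, Real.volume_Ioc]

theorem not_exists_affine_of_midpoint_ne {f : ℝ → ℝ} {s : Set ℝ} {x y : ℝ} (hx : x ∈ s)
    (hy : y ∈ s) (hxy : (x + y) / 2 ∈ s) (hf : f x + f y ≠ 2 * f ((x + y) / 2)) :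
    ¬ ∃ a b : ℝ, ∀ z ∈ s, f z = a + b * z := by
  rintro ⟨a, b, hab⟩
  apply hf
  rw [hab x hx, hab y hy, hab _ hxy]
  ring

noncomputable def condQuantile (x₂ τ : ℝ) : ℝ := τ ^ 3 / 3 - (τ - 1) ^ 2 * x₂

noncomputable def sparsity (x₂ τ : ℝ) : ℝ := τ ^ 2 - 2 * (τ - 1) * x₂

theorem hasDerivAt_condQuantile (x₂ τ : ℝ) :
    HasDerivAt (condQuantile x₂) (sparsity x₂ τ) τ := by
  have hcube : HasDerivAt (fun t : ℝ => t ^ 3 / 3) (τ ^ 2) τ := by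
    simpa using (hasDerivAt_pow 3 τ).div_const 3
  have hsq : HasDerivAt (fun t : ℝ => (t - 1) ^ 2 * x₂) (2 * (τ - 1) * x₂) τ := by
    simpa using (((hasDerivAt_id τ).sub_const 1).fun_pow 2).mul_const x₂
  exact hcube.sub hsq

theorem sparsity_pos {x₂ τ : ℝ} (hx₂ : 0 ≤ x₂) (hτ : τ ∈ Ioo (0 : ℝ) 1) : 0 < sparsity x₂ τ := by
  unfold sparsity
  nlinarith [hτ.1, hτ.2]

theorem strictMonoOn_condQuantile {x₂ : ℝ} (hx₂ : 0 ≤ x₂) :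
    StrictMonoOn (condQuantile x₂) (Ioo 0 1) := by
  refine strictMonoOn_of_deriv_pos (convex_Ioo 0 1)
    (fun τ _ => (hasDerivAt_condQuantile x₂ τ).continuousAt.continuousWithinAt) ?_
  intro τ hτ
  rw [interior_Ioo] at hτ
  rw [(hasDerivAt_condQuantile x₂ τ).deriv]
  exact sparsity_pos hx₂ hτ

theorem sparsity_eq_sparsity_self_add_sq (x₂ τ : ℝ) :
    sparsity x₂ τ = sparsity x₂ x₂ + (τ - x₂) ^ 2 := by
  unfold sparsity
  ring

theorem sparsity_self_lt {x₂ τ : ℝ} (hτ : τ ≠ x₂) : sparsity x₂ x₂ < sparsity x₂ τ := by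
  rw [sparsity_eq_sparsity_self_add_sq x₂ τ]
  exact lt_add_of_pos_right _ (sq_pos_of_ne_zero (sub_ne_zero.2 hτ))

/-- For `x₂ ∈ (0,1)` and `Y = U³/3 − x₂ (U−1)²` with `U ~ Uniform(0,1)`:
the conditional quantile function is `Q τ = τ³/3 − (τ−1)² x₂` (linear in `(1,x₂)`),
the sparsity `Q'(τ) = τ² − 2(τ−1)x₂` is uniquely minimized over `(0,1)` at `τ = x₂`,
and the conditional mode `m = Q(x₂) = −2x₂³/3 + 2x₂² − x₂` is nonlinear in `x₂`. -/
theorem quantile_mode_example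
    (x₂ : ℝ) (hx : x₂ ∈ Set.Ioo (0 : ℝ) 1) :
    -- Q is the quantile function of Y under the uniform distribution on (0,1):
    (∀ τ ∈ Set.Ioo (0 : ℝ) 1,
      (volume.restrict (Set.Ioo (0 : ℝ) 1))
          {u | u ^ 3 / 3 - x₂ * (u - 1) ^ 2 ≤ τ ^ 3 / 3 - (τ - 1) ^ 2 * x₂}
        = ENNReal.ofReal τ) ∧
    -- the sparsity is the derivative of Q:
    (∀ τ : ℝ, HasDerivAt (fun t : ℝ => t ^ 3 / 3 - (t - 1) ^ 2 * x₂)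
      (τ ^ 2 - 2 * (τ - 1) * x₂) τ) ∧
    -- the sparsity is uniquely minimized on (0,1) at τ = x₂:
    (∀ τ ∈ Set.Ioo (0 : ℝ) 1, τ ≠ x₂ →
      x₂ ^ 2 - 2 * (x₂ - 1) * x₂ < τ ^ 2 - 2 * (τ - 1) * x₂) ∧
    -- the mode value:
    (x₂ ^ 3 / 3 - (x₂ - 1) ^ 2 * x₂ = -2 * x₂ ^ 3 / 3 + 2 * x₂ ^ 2 - x₂) ∧
    -- the modal function is nonlinear in x₂:
    ¬ ∃ a b : ℝ, ∀ y ∈ Set.Ioo (0 : ℝ) 1,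
        -2 * y ^ 3 / 3 + 2 * y ^ 2 - y = a + b * y := by
  refine ⟨fun τ hτ => ?_, hasDerivAt_condQuantile x₂, fun τ _ hne => sparsity_self_lt hne,
    by ring, ?_⟩
  · simp only [mul_comm x₂]
    have := restrict_Ioo_setOf_le_eq_ofReal (strictMonoOn_condQuantile hx.1.le) hτ
    rwa [sub_zero] at this
  · exact not_exists_affine_of_midpoint_ne (x := 1 / 4) (y := 3 / 4)
      (by norm_num) (by norm_num) (by norm_num) (by norm_num)
end

section
/- Let F_Z be a distribution function satisfying 1 − F_Z(z) ~ (λ/z) e^{−(2/3)z³ − κz} as z → ∞ for constants λ, κ > 0, and let Z₁, …, Z_n be i.i.d. with distribution F_Z, Z_(n) = max_i Z_i. With a_n = 3(2/3)^{1/3}(log n)^{2/3} and b_n = (3/2 · log n)^{1/3} − a_n^{-1}[κ(3/2 · log n)^{1/3} + (1/3)log log n + (1/3)log(3/2) − log λ], one has P(a_n(Z_(n) − b_n) ≤ z) → exp(−e^{−z}) for every z ∈ ℝ. -/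
/-!
With `t = (3/2 · log n)^{1/3}` one has `n = exp((2/3)t³)` and `aₙ = 2t²`, and the level
`uₙ = bₙ + z/aₙ` equals `t + d` with `d = (z + log λ - κt - log t)/(2t²)`. This second-order
correction is chosen so that `(2/3)(t+d)³ + κ(t+d) = log n + z + log λ - log t + o(1)`, whence
`n · (λ/uₙ) e^{-(2/3)uₙ³ - κuₙ} → e^{-z}` and, by the tail equivalence, `n (1 - F(uₙ)) → e^{-z}`.
For i.i.d. variables `P(max_{i<n} Zᵢ ≤ uₙ) = F(uₙ)ⁿ = (1 - (1 - F(uₙ)))ⁿ → exp(-e^{-z})`.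
-/

open MeasureTheory Filter ProbabilityTheory Real Topology Asymptotics

-- `0 ≤ x` is needed because each `⨆ _ : i ∈ s, f i` with `i ∉ s` is `sSup ∅ = 0` in `ℝ`.
lemma Real.finset_biSup_le_iff {ι : Type*} {s : Finset ι} {f : ι → ℝ} {x : ℝ} (hx : 0 ≤ x) :
    ⨆ i ∈ s, f i ≤ x ↔ ∀ i ∈ s, f i ≤ x := by
  have hbdd : BddAbove (Set.range fun i => ⨆ _ : i ∈ s, f i) := by
    refine ((s.finite_toSet.image f).insert 0).bddAbove.mono ?_
    rintro _ ⟨i, rfl⟩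
    by_cases hi : i ∈ s
    · simpa [hi] using Or.inr ⟨i, hi, rfl⟩
    · simp [hi]
  refine ⟨fun h i hi => le_trans ?_ h, fun h => Real.iSup_le (fun i => Real.iSup_le (h i) hx) hx⟩
  simpa only [ciSup_pos hi] using le_ciSup hbdd i

section Maximum

variable {Ω : Type*} [MeasurableSpace Ω] {μ : Measure Ω} {Z : ℕ → Ω → ℝ}

lemma measure_forall_range_le_eq_pow (hindep : iIndepFun Z μ)
    (hident : ∀ i, IdentDistrib (Z i) (Z 0) μ μ) (n : ℕ) (x : ℝ) :
    μ {ω | ∀ i ∈ Finset.range n, Z i ω ≤ x} = μ {ω | Z 0 ω ≤ x} ^ n := by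
  have hset : {ω | ∀ i ∈ Finset.range n, Z i ω ≤ x} = ⋂ i ∈ Finset.range n, Z i ⁻¹' Set.Iic x := by
    ext ω
    simp
  rw [hset, hindep.meas_biInter fun i _ => ⟨Set.Iic x, measurableSet_Iic, rfl⟩,
    Finset.prod_congr rfl fun i _ => (hident i).measure_mem_eq measurableSet_Iic,
    Finset.prod_const, Finset.card_range]
  rfl

lemma tendsto_measure_forall_range_le (hindep : iIndepFun Z μ)
    (hident : ∀ i, IdentDistrib (Z i) (Z 0) μ μ) {u : ℕ → ℝ} {τ : ℝ}
    (h : Tendsto (fun n : ℕ => n * (1 - μ.real {ω | Z 0 ω ≤ u n})) atTop (𝓝 τ)) :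
    Tendsto (fun n => μ.real {ω | ∀ i ∈ Finset.range n, Z i ω ≤ u n}) atTop (𝓝 (exp (-τ))) := by
  have h' : Tendsto (fun n : ℕ => n * -(1 - μ.real {ω | Z 0 ω ≤ u n})) atTop (𝓝 (-τ)) := by
    simpa only [mul_neg] using h.neg
  refine (tendsto_one_add_pow_exp_of_tendsto h').congr fun n => ?_
  rw [measureReal_def, measureReal_def, measure_forall_range_le_eq_pow hindep hident,
    ENNReal.toReal_pow]
  ring

end Maximum

noncomputable def chernoffTail (lam κ x : ℝ) : ℝ := lam / x * exp (-(2 / 3) * x ^ 3 - κ * x)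

noncomputable def chernoffCorrection (κ c t : ℝ) : ℝ := (c - κ * t - log t) / (2 * t ^ 2)

section ChernoffCorrection

variable (κ c : ℝ)

lemma tendsto_mul_chernoffCorrection :
    Tendsto (fun t => t * chernoffCorrection κ c t) atTop (𝓝 (-(κ / 2))) := by
  have hlog : Tendsto (fun t => log t / t) atTop (𝓝 0) :=
    isLittleO_log_id_atTop.tendsto_div_nhds_zero
  have hinv : Tendsto (fun t : ℝ => c / t) atTop (𝓝 0) := tendsto_const_nhds.div_atTop tendsto_id
  have := ((hinv.sub (tendsto_const_nhds (x := κ))).sub hlog).div_const 2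
  rw [zero_sub, sub_zero, neg_div] at this
  refine this.congr' ?_
  filter_upwards [eventually_gt_atTop 0] with t ht
  rw [chernoffCorrection]
  field_simp

lemma tendsto_chernoffCorrection : Tendsto (chernoffCorrection κ c) atTop (𝓝 0) := by
  have := (tendsto_mul_chernoffCorrection κ c).mul tendsto_inv_atTop_zero
  rw [mul_zero] at this
  refine this.congr' ?_
  filter_upwards [eventually_gt_atTop 0] with t ht
  field_simp

lemma tendsto_add_chernoffCorrection_atTop :
    Tendsto (fun t => t + chernoffCorrection κ c t) atTop atTop :=
  tendsto_id.atTop_add (tendsto_chernoffCorrection κ c)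

lemma cube_add_chernoffCorrection {t : ℝ} (ht : t ≠ 0) :
    let d := chernoffCorrection κ c t
    2 / 3 * (t + d) ^ 3 + κ * (t + d)
      = 2 / 3 * t ^ 3 + c - log t + (2 * (t * d) * d + 2 / 3 * d ^ 3 + κ * d) := by
  intro d
  have h : 2 * t ^ 2 * d = c - κ * t - log t := by
    simp only [d, chernoffCorrection]
    field_simp
  linear_combination h

lemma tendsto_exp_mul_chernoffTail (lam : ℝ) :
    Tendsto (fun t => exp (2 / 3 * t ^ 3) * chernoffTail lam κ (t + chernoffCorrection κ c t))
      atTop (𝓝 (lam * exp (-c))) := by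
  set d := chernoffCorrection κ c
  have hd : Tendsto d atTop (𝓝 0) := tendsto_chernoffCorrection κ c
  have hrem : Tendsto (fun t => 2 * (t * d t) * d t + 2 / 3 * d t ^ 3 + κ * d t) atTop (𝓝 0) := by
    simpa using (((tendsto_mul_chernoffCorrection κ c).const_mul 2).mul hd).add
      ((hd.pow 3).const_mul (2 / 3)) |>.add (hd.const_mul κ)
  have hratio : Tendsto (fun t => t / (t + d t)) atTop (𝓝 1) := by
    have := ((hd.mul tendsto_inv_atTop_zero).const_add 1).inv₀ (by norm_num)
    simp only [mul_zero, add_zero, inv_one] at this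
    refine this.congr' ?_
    filter_upwards [eventually_gt_atTop 0] with t ht
    field_simp
  have := (hratio.mul ((continuous_exp.tendsto 0).comp (neg_zero (G := ℝ) ▸ hrem.neg))).const_mul
    (lam * exp (-c))
  simp only [Function.comp_apply, exp_zero, mul_one] at this
  refine this.congr' ?_
  filter_upwards [eventually_gt_atTop 0,
    (tendsto_add_chernoffCorrection_atTop κ c).eventually_gt_atTop 0] with t ht htd
  have hexp : -(2 / 3) * (t + d t) ^ 3 - κ * (t + d t)
      = -(2 / 3 * t ^ 3) - c + log t - (2 * (t * d t) * d t + 2 / 3 * d t ^ 3 + κ * d t) := by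
    linear_combination -(cube_add_chernoffCorrection κ c ht.ne')
  rw [chernoffTail, hexp]
  simp only [sub_eq_add_neg, exp_add, exp_neg, exp_log ht]
  field_simp

end ChernoffCorrection

lemma rpow_one_third_pow_three {x : ℝ} (hx : 0 ≤ x) : (x ^ (1 / 3 : ℝ)) ^ 3 = x := by
  rw [one_div, ← Nat.cast_ofNat, rpow_inv_natCast_pow hx three_ne_zero]

lemma three_mul_rpow_eq_two_mul_sq {L : ℝ} (hL : 0 ≤ L) :
    3 * (2 / 3 : ℝ) ^ (1 / 3 : ℝ) * L ^ (2 / 3 : ℝ) = 2 * ((3 / 2 * L) ^ (1 / 3 : ℝ)) ^ 2 := by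
  refine (pow_left_inj₀ (by positivity) (by positivity) three_ne_zero).mp ?_
  have hL23 : (L ^ (2 / 3 : ℝ)) ^ 3 = L ^ 2 := by
    rw [← rpow_natCast, ← rpow_mul hL]
    norm_num
  rw [mul_pow, mul_pow, rpow_one_third_pow_three (by norm_num), hL23, mul_pow, ← pow_mul,
    show 2 * 3 = 3 * 2 by rfl, pow_mul, rpow_one_third_pow_three (by positivity)]
  ring

noncomputable def chernoffLevel (κ c : ℝ) (n : ℕ) : ℝ :=
  (3 / 2 * log n) ^ (1 / 3 : ℝ) + chernoffCorrection κ c ((3 / 2 * log n) ^ (1 / 3 : ℝ))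

lemma chernoffLevel_eq (κ lam z : ℝ) {n : ℕ} (hn : 0 < log n) :
    let t := (3 / 2 * log n) ^ (1 / 3 : ℝ)
    let a := 3 * (2 / 3 : ℝ) ^ (1 / 3 : ℝ) * log n ^ (2 / 3 : ℝ)
    t - 1 / a * (κ * t + 1 / 3 * log (log n) + 1 / 3 * log (3 / 2) - log lam) + z / a
      = chernoffLevel κ (z + log lam) n := by
  intro t a
  have hlog : log t = 1 / 3 * log (log n) + 1 / 3 * log (3 / 2) := by
    rw [log_rpow (by positivity), log_mul (by norm_num) hn.ne']
    ring
  have ha : a = 2 * t ^ 2 := three_mul_rpow_eq_two_mul_sq hn.le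
  have ht : 0 < t := by positivity
  change _ = t + chernoffCorrection κ (z + log lam) t
  rw [ha, chernoffCorrection, hlog]
  field_simp
  ring

lemma tendsto_rpow_one_third_log_atTop :
    Tendsto (fun n : ℕ => (3 / 2 * log n) ^ (1 / 3 : ℝ)) atTop atTop :=
  (tendsto_rpow_atTop (by norm_num)).comp
    ((tendsto_log_atTop.comp tendsto_natCast_atTop_atTop).const_mul_atTop (by norm_num))

lemma tendsto_chernoffLevel_atTop (κ c : ℝ) : Tendsto (chernoffLevel κ c) atTop atTop :=
  (tendsto_add_chernoffCorrection_atTop κ c).comp tendsto_rpow_one_third_log_atTop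

lemma tendsto_natCast_mul_chernoffTail_chernoffLevel {lam : ℝ} (hlam : 0 < lam) (κ z : ℝ) :
    Tendsto (fun n : ℕ => n * chernoffTail lam κ (chernoffLevel κ (z + log lam) n)) atTop
      (𝓝 (exp (-z))) := by
  have hc : lam * exp (-(z + log lam)) = exp (-z) := by
    rw [neg_add, exp_add, exp_neg (log lam), exp_log hlam]
    field_simp
  have := (tendsto_exp_mul_chernoffTail κ (z + log lam) lam).comp tendsto_rpow_one_third_log_atTop
  rw [hc] at this
  refine this.congr' ?_
  filter_upwards [eventually_gt_atTop 1] with n hn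
  have hlog : 0 ≤ log n := log_nonneg (by exact_mod_cast hn.le)
  rw [Function.comp_apply, rpow_one_third_pow_three (by positivity), ← mul_assoc,
    show 2 / 3 * (3 / 2 : ℝ) = 1 by norm_num, one_mul, exp_log (by positivity), chernoffLevel]

theorem gumbel_limit_chernoff_tail_general
    {Ω : Type*} [MeasurableSpace Ω] (μ : Measure Ω) [IsProbabilityMeasure μ]
    (Z : ℕ → Ω → ℝ)
    (hindep : iIndepFun Z μ)
    (hident : ∀ i, IdentDistrib (Z i) (Z 0) μ μ)
    (F : ℝ → ℝ) (hF : ∀ z, F z = (μ {ω | Z 0 ω ≤ z}).toReal)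
    (lam κ : ℝ) (hlam : 0 < lam)
    (htail : Tendsto
      (fun z : ℝ => (1 - F z) / ((lam / z) * Real.exp (-(2 / 3) * z ^ 3 - κ * z)))
      atTop (nhds 1))
    (a b : ℕ → ℝ)
    (hA : ∀ n : ℕ, a n = 3 * ((2 : ℝ) / 3) ^ ((1 : ℝ) / 3) * (Real.log n) ^ ((2 : ℝ) / 3))
    (hB : ∀ n : ℕ, b n = ((3 : ℝ) / 2 * Real.log n) ^ ((1 : ℝ) / 3)
      - (1 / a n) * (κ * ((3 : ℝ) / 2 * Real.log n) ^ ((1 : ℝ) / 3)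
          + (1 / 3) * Real.log (Real.log n) + (1 / 3) * Real.log ((3 : ℝ) / 2)
          - Real.log lam)) :
    ∀ z : ℝ,
      Tendsto
        (fun n : ℕ =>
          (μ {ω | a n * ((⨆ i ∈ Finset.range n, Z i ω) - b n) ≤ z}).toReal)
        atTop (nhds (Real.exp (-Real.exp (-z)))) := by
  intro z
  obtain rfl : F = fun x => μ.real {ω | Z 0 ω ≤ x} := funext hF
  have hlog : ∀ᶠ n : ℕ in atTop, 0 < log n :=
    (tendsto_log_atTop.comp tendsto_natCast_atTop_atTop).eventually_gt_atTop 0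
  have hlevel : ∀ᶠ n in atTop, b n + z / a n = chernoffLevel κ (z + log lam) n := by
    filter_upwards [hlog] with n hn
    rw [hB, hA]
    exact chernoffLevel_eq κ lam z hn
  have hu : Tendsto (fun n => b n + z / a n) atTop atTop :=
    (tendsto_chernoffLevel_atTop _ _).congr' (hlevel.mono fun _ h => h.symm)
  have hnF : Tendsto (fun n : ℕ => n * (1 - μ.real {ω | Z 0 ω ≤ b n + z / a n})) atTop
      (𝓝 (exp (-z))) := by
    have hequiv := (isEquivalent_of_tendsto_one htail).comp_tendsto hu
    refine (IsEquivalent.refl.mul hequiv).symm.tendsto_nhds ?_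
    refine (tendsto_natCast_mul_chernoffTail_chernoffLevel hlam κ z).congr' ?_
    filter_upwards [hlevel] with n hn
    change _ = n * chernoffTail lam κ (b n + z / a n)
    rw [hn]
  refine (tendsto_measure_forall_range_le hindep hident hnF).congr' ?_
  filter_upwards [hlog, hu.eventually_ge_atTop 0] with n hn hun
  have ha : 0 < a n := by
    rw [hA]
    exact mul_pos (by positivity) (rpow_pos_of_pos hn _)
  congr 1
  ext ω
  exact (((le_div_iff₀' ha).symm.trans sub_le_iff_le_add').trans
    (Real.finset_biSup_le_iff hun)).symm

/-- Gumbel limit for the maximum of i.i.d. random variables with Chernoff-type tail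
`1 − F(z) ~ (λ/z) e^{−(2/3)z³ − κz}`: with the norming constants
`aₙ = 3(2/3)^{1/3}(log n)^{2/3}` and
`bₙ = (3/2 log n)^{1/3} − aₙ⁻¹[κ(3/2 log n)^{1/3} + (1/3)log log n + (1/3)log(3/2) − log λ]`,
`P(aₙ(Z_(n) − bₙ) ≤ z) → exp(−e^{−z})` for every `z`. -/
theorem gumbel_limit_chernoff_tail
    {Ω : Type*} [MeasurableSpace Ω] (μ : Measure Ω) [IsProbabilityMeasure μ]
    (Z : ℕ → Ω → ℝ) (hmeas : ∀ i, Measurable (Z i))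
    (hindep : iIndepFun Z μ)
    (hident : ∀ i, IdentDistrib (Z i) (Z 0) μ μ)
    (F : ℝ → ℝ) (hF : ∀ z, F z = (μ {ω | Z 0 ω ≤ z}).toReal)
    (lam κ : ℝ) (hlam : 0 < lam) (hκ : 0 < κ)
    (htail : Tendsto
      (fun z : ℝ => (1 - F z) / ((lam / z) * Real.exp (-(2 / 3) * z ^ 3 - κ * z)))
      atTop (nhds 1))
    (a b : ℕ → ℝ)
    (hA : ∀ n : ℕ, a n = 3 * ((2 : ℝ) / 3) ^ ((1 : ℝ) / 3) * (Real.log n) ^ ((2 : ℝ) / 3))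
    (hB : ∀ n : ℕ, b n = ((3 : ℝ) / 2 * Real.log n) ^ ((1 : ℝ) / 3)
      - (1 / a n) * (κ * ((3 : ℝ) / 2 * Real.log n) ^ ((1 : ℝ) / 3)
          + (1 / 3) * Real.log (Real.log n) + (1 / 3) * Real.log ((3 : ℝ) / 2)
          - Real.log lam)) :
    ∀ z : ℝ,
      Tendsto
        (fun n : ℕ =>
          (μ {ω | a n * ((⨆ i ∈ Finset.range n, Z i ω) - b n) ≤ z}).toReal)
        atTop (nhds (Real.exp (-Real.exp (-z)))) :=
  gumbel_limit_chernoff_tail_general μ Z hindep hident F hF lam κ hlam htail a b hA hB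
end
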